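/- Let 𝔛 = (ℚ, τ) be the neighborhood frame on the rational numbers where τ(x) is the neighborhood filter of x in the standard (order) topology on ℚ. Then the bimodal logic of the product 2-frame 𝔛 × 𝔛 equals the fusion S4 ⊗ S4. -/

import Mathlib

set_option autoImplicit false

/-- Modal formulas with `n` modalities (propositional letters indexed by `ℕ`). -/
inductive MFormula (n : ℕ) : Type
  | prop : ℕ → MFormula n
  | bot  : MFormula n
  | imp  : MFormula n → MFormula n → MFormula n
  | box  : Fin n → MFormula n → MFormula n

namespace MFormula

/-- Negation as an abbreviation: ¬φ := φ → ⊥. -/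
def neg {n : ℕ} (φ : MFormula n) : MFormula n := φ.imp .bot

/-- Uniform substitution of formulas for propositional letters. -/
def subst {n : ℕ} (s : ℕ → MFormula n) : MFormula n → MFormula n
  | prop p  => s p
  | bot     => bot
  | imp φ ψ => imp (φ.subst s) (ψ.subst s)
  | box i φ => box i (φ.subst s)

end MFormula

/-- A classical tautology: true under every boolean valuation of formulas
(a valuation respecting `⊥` and `→`, arbitrary on letters and boxed formulas). -/
def IsTautology {n : ℕ} (φ : MFormula n) : Prop :=
  ∀ v : MFormula n → Prop,
    ¬ v .bot → (∀ ψ χ : MFormula n, v (ψ.imp χ) ↔ (v ψ → v χ)) → v φ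

/-- Normal modal logics with `n` modalities. -/
structure IsNormalLogic {n : ℕ} (L : Set (MFormula n)) : Prop where
  taut : ∀ φ : MFormula n, IsTautology φ → φ ∈ L
  kax : ∀ (i : Fin n) (p q : MFormula n),
    ((MFormula.box i (p.imp q)).imp ((MFormula.box i p).imp (MFormula.box i q))) ∈ L
  mp : ∀ φ ψ : MFormula n, φ.imp ψ ∈ L → φ ∈ L → ψ ∈ L
  subst : ∀ (φ : MFormula n) (s : ℕ → MFormula n), φ ∈ L → φ.subst s ∈ L
  nec : ∀ (i : Fin n) (φ : MFormula n), φ ∈ L → MFormula.box i φ ∈ L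

/-- The smallest normal logic containing `Γ`. -/
def NormalClosure {n : ℕ} (Γ : Set (MFormula n)) : Set (MFormula n) :=
  ⋂₀ {L : Set (MFormula n) | IsNormalLogic L ∧ Γ ⊆ L}

/-- The axiom □p → ¬□¬p. -/
def dAx : MFormula 1 :=
  (MFormula.box 0 (.prop 0)).imp (MFormula.neg (MFormula.box 0 (MFormula.neg (.prop 0))))

/-- The axiom □p → p. -/
def tAx : MFormula 1 := (MFormula.box 0 (.prop 0)).imp (.prop 0)

/-- The axiom □p → □□p. -/
def fourAx : MFormula 1 :=
  (MFormula.box 0 (.prop 0)).imp (MFormula.box 0 (MFormula.box 0 (.prop 0)))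

def LogicK : Set (MFormula 1) := NormalClosure ∅
def LogicD : Set (MFormula 1) := NormalClosure (LogicK ∪ {dAx})
def LogicT : Set (MFormula 1) := NormalClosure (LogicK ∪ {tAx})
def LogicD4 : Set (MFormula 1) := NormalClosure (LogicD ∪ {fourAx})
def LogicS4 : Set (MFormula 1) := NormalClosure (LogicT ∪ {fourAx})

/-- Translation of a unimodal formula into the bimodal language, replacing □ by □_i. -/
def trTo (i : Fin 2) : MFormula 1 → MFormula 2
  | .prop p  => .prop p
  | .bot     => .bot
  | .imp φ ψ => .imp (trTo i φ) (trTo i ψ)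
  | .box _ φ => .box i (trTo i φ)

/-- The fusion `L₁ ⊗ L₂` of two unimodal logics: the smallest bimodal normal logic
containing the translation of `L₁` (□ ↦ □₁) and of `L₂` (□ ↦ □₂). -/
def Fusion (L₁ L₂ : Set (MFormula 1)) : Set (MFormula 2) :=
  NormalClosure (trTo 0 '' L₁ ∪ trTo 1 '' L₂)

/-- Truth in a Kripke model. -/
def kSat {n : ℕ} {W : Type} (R : Fin n → W → W → Prop) (V : ℕ → Set W) :
    W → MFormula n → Prop
  | w, .prop p  => w ∈ V p
  | _, .bot     => False
  | w, .imp φ ψ => kSat R V w φ → kSat R V w ψ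
  | w, .box i φ => ∀ v : W, R i w v → kSat R V v φ

/-- The logic of a Kripke `n`-frame. -/
def KLogn {n : ℕ} {W : Type} [Nonempty W] (R : Fin n → W → W → Prop) :
    Set (MFormula n) :=
  {φ | ∀ (V : ℕ → Set W) (w : W), kSat R V w φ}

/-- The logic of a unimodal Kripke frame. -/
def KLog {W : Type} [Nonempty W] (R : W → W → Prop) : Set (MFormula 1) :=
  KLogn (fun _ => R)

/-- The logic of a bimodal Kripke frame. -/
def KLog2 {W : Type} [Nonempty W] (R₁ R₂ : W → W → Prop) : Set (MFormula 2) :=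
  KLogn ![R₁, R₂]

/-- Truth in a (monotone) neighborhood model: `x ⊨ □_i φ` iff the truth set of `φ`
belongs to the filter `τ i x`. -/
def nSat {n : ℕ} {X : Type} (τ : Fin n → X → Filter X) (V : ℕ → Set X) :
    X → MFormula n → Prop
  | x, .prop p  => x ∈ V p
  | _, .bot     => False
  | x, .imp φ ψ => nSat τ V x φ → nSat τ V x ψ
  | x, .box i φ => {y | nSat τ V y φ} ∈ τ i x

/-- The logic of a neighborhood `n`-frame. -/
def NLogn {n : ℕ} {X : Type} [Nonempty X] (τ : Fin n → X → Filter X) :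
    Set (MFormula n) :=
  {φ | ∀ (V : ℕ → Set X) (x : X), nSat τ V x φ}

/-- The logic of a unimodal neighborhood frame. -/
def NLog {X : Type} [Nonempty X] (τ : X → Filter X) : Set (MFormula 1) :=
  NLogn (fun _ => τ)

/-- The logic of a neighborhood 2-frame. -/
def NLog2 {X : Type} [Nonempty X] (τ₁ τ₂ : X → Filter X) : Set (MFormula 2) :=
  NLogn ![τ₁, τ₂]

/-- Validity of a unimodal formula in a neighborhood frame. -/
def NValid {X : Type} (τ : X → Filter X) (φ : MFormula 1) : Prop :=
  ∀ (V : ℕ → Set X) (x : X), nSat (fun _ => τ) V x φ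

/-- The neighborhood frame `N(F)` of a Kripke frame `F = (W, R)`:
`τ(w)` is the principal filter of `R(w)`. -/
def nOfK {W : Type} (R : W → W → Prop) (w : W) : Filter W :=
  Filter.principal {v | R w v}

/-- Bounded morphisms between neighborhood frames (with neighborhood functions
indexed by `ι`). -/
def IsNdMorphism {ι X Y : Type} (τ : ι → X → Filter X) (σ : ι → Y → Filter Y)
    (f : X → Y) : Prop :=
  Function.Surjective f ∧
    ∀ (i : ι) (x : X),
      (∀ U ∈ τ i x, f '' U ∈ σ i (f x)) ∧
      (∀ V ∈ σ i (f x), ∃ U ∈ τ i x, f '' U ⊆ V)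

/-- First neighborhood function of the product of two neighborhood frames:
`U ∈ τ'_1(x₁,x₂)` iff `∃ V ∈ τ₁ x₁, V × {x₂} ⊆ U`. -/
def prodTau1 {X₁ X₂ : Type} (τ₁ : X₁ → Filter X₁) (p : X₁ × X₂) :
    Filter (X₁ × X₂) :=
  (τ₁ p.1).map (fun x => (x, p.2))

/-- Second neighborhood function of the product of two neighborhood frames:
`U ∈ τ'_2(x₁,x₂)` iff `∃ V ∈ τ₂ x₂, {x₁} × V ⊆ U`. -/
def prodTau2 {X₁ X₂ : Type} (τ₂ : X₂ → Filter X₂) (p : X₁ × X₂) :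
    Filter (X₁ × X₂) :=
  (τ₂ p.2).map (fun y => (p.1, y))

/-- The successor relation on finite sequences: `a R b` iff `b = a·x` for some `x ∈ A`. -/
def sucRel (A : Type) (a b : List A) : Prop := ∃ x : A, b = a ++ [x]

/-- The four kinds of tree frames: irreflexive/reflexive, non-transitive/transitive. -/
inductive TreeKind : Type
  | inn  -- irreflexive non-transitive: F_in
  | rn   -- reflexive non-transitive: F_rn (reflexive closure)
  | itr  -- irreflexive transitive: F_it (transitive closure)
  | rt   -- reflexive transitive: F_rt (reflexive-transitive closure)

/-- The relation of the tree frame `F_{ξη}[A]` on `A*`. -/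
def treeRel (A : Type) : TreeKind → List A → List A → Prop
  | .inn => sucRel A
  | .rn  => fun a b => a = b ∨ sucRel A a b
  | .itr => Relation.TransGen (sucRel A)
  | .rt  => Relation.ReflTransGen (sucRel A)

/-- First relation of the product frame `F₁ ⊗ F₂` on `(A ⊔ B)*`:
`x R'_1 y` iff `y = x·z` for some `z ∈ A*` with `Λ R₁ z`. -/
def prodRel1 (A B : Type) (k : TreeKind) (x y : List (A ⊕ B)) : Prop :=
  ∃ z : List A, treeRel A k [] z ∧ y = x ++ z.map Sum.inl

/-- Second relation of the product frame `F₁ ⊗ F₂` on `(A ⊔ B)*`. -/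
def prodRel2 (A B : Type) (k : TreeKind) (x y : List (A ⊕ B)) : Prop :=
  ∃ z : List B, treeRel B k [] z ∧ y = x ++ z.map Sum.inr

/-- Pseudo-infinite sequences over `A ∪ {0}` (with `0` modelled by `none`, so
automatically `0 ∉ A`) that are eventually `0`. -/
def PSeq (A : Type) : Type :=
  {α : ℕ → Option A // ∃ N, ∀ k ≥ N, α k = none}

instance {A : Type} : Nonempty (PSeq A) := ⟨⟨fun _ => none, 0, fun _ _ => rfl⟩⟩

/-- `st(α)`: the least `N` such that `α` has only zeros from position `N` on. -/
noncomputable def PSeq.st {A : Type} (α : PSeq A) : ℕ :=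
  sInf {N | ∀ k ≥ N, α.1 k = none}

/-- `f_F(α)`: the finite sequence obtained from `α` by deleting all zeros. -/
noncomputable def PSeq.forget {A : Type} (α : PSeq A) : List A :=
  ((List.range α.st).map α.1).reduceOption

/-- The basic neighborhood `U_k(α)` of `α`, relative to the relation `R` on `A*`:
`{β ∈ X : α|_m = β|_m and f_F(α) R f_F(β)}` where `m = max(k, st(α))`. -/
def Unbhd {A : Type} (R : List A → List A → Prop) (k : ℕ) (α : PSeq A) :
    Set (PSeq A) :=
  {β | (∀ i < max k α.st, α.1 i = β.1 i) ∧ R α.forget β.forget}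

/-- The neighborhood function of `N_ω(F)`: `τ(α)` is the filter generated by the
base `{U_k(α) : k ∈ ℕ}`. -/
noncomputable def nOmega {A : Type} (R : List A → List A → Prop) (α : PSeq A) :
    Filter (PSeq A) :=
  ⨅ k : ℕ, Filter.principal (Unbhd R k α)

/-- The interleaving `x₁ y₁ x₂ y₂ …` of two pseudo-infinite sequences. -/
def interleave {A B : Type} (α : PSeq A) (β : PSeq B) : PSeq (A ⊕ B) :=
  ⟨fun n => if n % 2 = 0 then (α.1 (n / 2)).map Sum.inl
            else (β.1 (n / 2)).map Sum.inr, by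
    obtain ⟨N₁, h₁⟩ := α.2
    obtain ⟨N₂, h₂⟩ := β.2
    refine ⟨2 * max N₁ N₂, fun k hk => ?_⟩
    have hdiv : max N₁ N₂ ≤ k / 2 := by omega
    by_cases h : k % 2 = 0
    · simp [h, h₁ (k / 2) (le_trans (le_max_left _ _) hdiv)]
    · simp [h, h₂ (k / 2) (le_trans (le_max_right _ _) hdiv)]⟩

/-- The map `g`: delete all zeros from the interleaving of `α` and `β`. -/
noncomputable def gMap {A B : Type} (p : PSeq A × PSeq B) : List (A ⊕ B) :=
  (interleave p.1 p.2).forget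

/-!
Soundness: every topological space validates S4, and a formula translated from one coordinate
is evaluated on the horizontal or vertical slice through the point, so `ℚ × ℚ` validates
S4 ⊗ S4.

Completeness: a non-theorem of S4 ⊗ S4 is refuted at the root of the unravelling of the
canonical model, a tree of words over `ℕ ⊕ ℕ` where `□ᵢ` quantifies over all extensions by
letters of sort `i`. Identify `ℚ` with the eventually-zero sequences `PSeq ℕ` by Cantor's
back-and-forth theorem for a lexicographic order whose neighbourhoods are the cylinders. The
map sending `(α, β)` to the letters of the interleaving of `α` and `β` carries the horizontal
(vertical) neighbourhood filter of each point onto the extensions of its image by letters of sort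
`0` (`1`): changing `α` only beyond every nonzero position of `α` and `β` appends exactly the
new letters of `α`, and every word can be appended this way. Such a map preserves truth, so the
countermodel transfers to `ℚ × ℚ`.
-/

open Filter Topology

section NormalLogic

variable {n : ℕ}

theorem isNormalLogic_normalClosure (Γ : Set (MFormula n)) : IsNormalLogic (NormalClosure Γ) where
  taut φ h _ hL := hL.1.taut φ h
  kax i p q _ hL := hL.1.kax i p q
  mp φ ψ h₁ h₂ L hL := hL.1.mp φ ψ (h₁ L hL) (h₂ L hL)
  subst φ s h L hL := hL.1.subst φ s (h L hL)
  nec i φ h L hL := hL.1.nec i φ (h L hL)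

theorem normalClosure_subset {Γ M : Set (MFormula n)} (hM : IsNormalLogic M) (hΓ : Γ ⊆ M) :
    NormalClosure Γ ⊆ M :=
  Set.sInter_subset_of_mem ⟨hM, hΓ⟩

theorem subset_normalClosure (Γ : Set (MFormula n)) : Γ ⊆ NormalClosure Γ :=
  fun _ hφ _ hL => hL.2 hφ

theorem logicS4_subset {M : Set (MFormula 1)} (hM : IsNormalLogic M) (hT : tAx ∈ M)
    (h4 : fourAx ∈ M) : LogicS4 ⊆ M := by
  have hK : LogicK ⊆ M := normalClosure_subset hM (Set.empty_subset M)
  have hLT : LogicT ⊆ M := normalClosure_subset hM (Set.union_subset hK (by simpa using hT))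
  exact normalClosure_subset hM (Set.union_subset hLT (by simpa using h4))

theorem tAx_mem_logicS4 : tAx ∈ LogicS4 :=
  subset_normalClosure _ (Or.inl (subset_normalClosure _ (Or.inr rfl)))

theorem fourAx_mem_logicS4 : fourAx ∈ LogicS4 :=
  subset_normalClosure _ (Or.inr rfl)

theorem trTo_mem_fusion_self {L : Set (MFormula 1)} {φ : MFormula 1} (h : φ ∈ L) (i : Fin 2) :
    trTo i φ ∈ Fusion L L := by
  fin_cases i
  · exact subset_normalClosure _ (Or.inl ⟨φ, h, rfl⟩)
  · exact subset_normalClosure _ (Or.inr ⟨φ, h, rfl⟩)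

theorem box_imp_mem_fusion_logicS4 (i : Fin 2) (χ : MFormula 2) :
    (MFormula.box i χ).imp χ ∈ Fusion LogicS4 LogicS4 :=
  (isNormalLogic_normalClosure _).subst _ (fun _ => χ) (trTo_mem_fusion_self tAx_mem_logicS4 i)

theorem box_imp_box_box_mem_fusion_logicS4 (i : Fin 2) (χ : MFormula 2) :
    (MFormula.box i χ).imp (.box i (.box i χ)) ∈ Fusion LogicS4 LogicS4 :=
  (isNormalLogic_normalClosure _).subst _ (fun _ => χ) (trTo_mem_fusion_self fourAx_mem_logicS4 i)

end NormalLogic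

section NeighborhoodSemantics

variable {n : ℕ} {X : Type}

theorem nSat_subst (τ : Fin n → X → Filter X) (V : ℕ → Set X) (s : ℕ → MFormula n)
    (φ : MFormula n) (x : X) :
    nSat τ V x (φ.subst s) ↔ nSat τ (fun p => {y | nSat τ V y (s p)}) x φ := by
  induction φ generalizing x with
  | prop p => rfl
  | bot => rfl
  | imp φ ψ ihφ ihψ => exact imp_congr (ihφ x) (ihψ x)
  | box i φ ih =>
    change {y | nSat τ V y (φ.subst s)} ∈ τ i x ↔ {y | _} ∈ τ i x
    simp only [ih]

theorem isNormalLogic_NLogn [Nonempty X] (τ : Fin n → X → Filter X) :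
    IsNormalLogic (NLogn τ) where
  taut _ h V x := h (nSat τ V x) id fun _ _ => Iff.rfl
  kax _ _ _ _ _ h₁ h₂ := mem_of_superset (inter_mem h₁ h₂) fun _ hy => hy.1 hy.2
  mp _ _ h₁ h₂ V x := h₁ V x (h₂ V x)
  subst φ s h V x := (nSat_subst τ V s φ x).2 (h _ x)
  nec _ _ h V _ := univ_mem' fun y => h V y

theorem nSat_comap {Y : Type} {τ : Fin n → X → Filter X} {σ : Fin n → Y → Filter Y} {f : X → Y}
    (hf : ∀ i x, σ i (f x) = map f (τ i x)) (V : ℕ → Set Y) (φ : MFormula n) (x : X) :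
    nSat τ (fun p => f ⁻¹' V p) x φ ↔ nSat σ V (f x) φ := by
  induction φ generalizing x with
  | prop p => rfl
  | bot => rfl
  | imp φ ψ ihφ ihψ => exact imp_congr (ihφ x) (ihψ x)
  | box i φ ih =>
    change {x' | _} ∈ τ i x ↔ {y | _} ∈ σ i (f x)
    rw [hf, mem_map]
    simp only [ih]
    rfl

theorem logicS4_subset_NLog_nhds [TopologicalSpace X] [Nonempty X] :
    LogicS4 ⊆ NLog fun x : X => 𝓝 x :=
  logicS4_subset (isNormalLogic_NLogn _) (fun _ _ h => mem_of_mem_nhds h)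
    fun _ _ h => eventually_eventually_nhds.2 h

end NeighborhoodSemantics

section Product

variable {X₁ X₂ : Type} (τ₁ : X₁ → Filter X₁) (τ₂ : X₂ → Filter X₂)

theorem nSat_prod_trTo_zero (V : ℕ → Set (X₁ × X₂)) (ψ : MFormula 1) (x : X₁) (y : X₂) :
    nSat ![prodTau1 τ₁, prodTau2 τ₂] V (x, y) (trTo 0 ψ) ↔
      nSat (fun _ => τ₁) (fun p => {x' | (x', y) ∈ V p}) x ψ := by
  induction ψ generalizing x with
  | prop p => rfl
  | bot => rfl
  | imp φ χ ihφ ihχ => exact imp_congr (ihφ x) (ihχ x)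
  | box i φ ih =>
    change {q | _} ∈ map _ (τ₁ x) ↔ {x' | _} ∈ τ₁ x
    rw [mem_map]
    simp only [Set.preimage_ofPred_eq, ih]

theorem nSat_prod_trTo_one (V : ℕ → Set (X₁ × X₂)) (ψ : MFormula 1) (x : X₁) (y : X₂) :
    nSat ![prodTau1 τ₁, prodTau2 τ₂] V (x, y) (trTo 1 ψ) ↔
      nSat (fun _ => τ₂) (fun p => {y' | (x, y') ∈ V p}) y ψ := by
  induction ψ generalizing y with
  | prop p => rfl
  | bot => rfl
  | imp φ χ ihφ ihχ => exact imp_congr (ihφ y) (ihχ y)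
  | box i φ ih =>
    change {q | _} ∈ map _ (τ₂ y) ↔ {y' | _} ∈ τ₂ y
    rw [mem_map]
    simp only [Set.preimage_ofPred_eq, ih]

theorem fusion_subset_NLog2_prod [Nonempty X₁] [Nonempty X₂] {L₁ L₂ : Set (MFormula 1)}
    (h₁ : L₁ ⊆ NLog τ₁) (h₂ : L₂ ⊆ NLog τ₂) :
    Fusion L₁ L₂ ⊆ NLog2 (prodTau1 τ₁) (prodTau2 τ₂) := by
  refine normalClosure_subset (isNormalLogic_NLogn _) ?_
  rintro _ (⟨ψ, hψ, rfl⟩ | ⟨ψ, hψ, rfl⟩) V ⟨x, y⟩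
  · exact (nSat_prod_trTo_zero τ₁ τ₂ V ψ x y).2 (h₁ hψ _ x)
  · exact (nSat_prod_trTo_one τ₁ τ₂ V ψ x y).2 (h₂ hψ _ y)

end Product

namespace MFormula

variable {m : ℕ}

def encode : MFormula m → ℕ
  | prop p => Nat.pair 0 p
  | bot => Nat.pair 1 0
  | imp φ ψ => Nat.pair 2 (Nat.pair φ.encode ψ.encode)
  | box i φ => Nat.pair 3 (Nat.pair i φ.encode)

theorem encode_injective : Function.Injective (encode (m := m)) := by
  intro φ ψ h
  induction φ generalizing ψ with
  | prop p => cases ψ <;> simp_all [encode, Nat.pair_eq_pair]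
  | bot => cases ψ <;> simp_all [encode, Nat.pair_eq_pair]
  | imp φ₁ φ₂ ih₁ ih₂ =>
    cases ψ <;> simp only [encode, Nat.pair_eq_pair] at h <;> try omega
    rw [ih₁ h.2.1, ih₂ h.2.2]
  | box i φ ih =>
    cases ψ <;> simp only [encode, Nat.pair_eq_pair] at h <;> try omega
    rw [Fin.ext h.2.1, ih h.2.2]

instance : Countable (MFormula m) := encode_injective.countable

instance : Nonempty (MFormula m) := ⟨bot⟩

end MFormula

section Derivations

variable {m : ℕ} {L Γ : Set (MFormula m)}

theorem foldr_imp_iff (v : MFormula m → Prop) (hv : ∀ ψ χ, v (ψ.imp χ) ↔ (v ψ → v χ))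
    (l : List (MFormula m)) (χ : MFormula m) :
    v (l.foldr .imp χ) ↔ ((∀ ψ ∈ l, v ψ) → v χ) := by
  induction l with
  | nil => simp
  | cons a l ih => simp only [List.foldr_cons, hv, ih, List.forall_mem_cons]; tauto

def Deriv (L Γ : Set (MFormula m)) (χ : MFormula m) : Prop :=
  ∃ l : List (MFormula m), (∀ ψ ∈ l, ψ ∈ Γ) ∧ l.foldr .imp χ ∈ L

def LConsistent (L Γ : Set (MFormula m)) : Prop := ¬ Deriv L Γ .bot

def IsMCS (L Γ : Set (MFormula m)) : Prop := Maximal (LConsistent L) Γ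

theorem Deriv.mono {Γ' : Set (MFormula m)} {χ : MFormula m} (hd : Deriv L Γ χ) (h : Γ ⊆ Γ') :
    Deriv L Γ' χ :=
  let ⟨l, hl, hχ⟩ := hd; ⟨l, fun ψ hψ => h (hl ψ hψ), hχ⟩

theorem Deriv.of_mem_logic {χ : MFormula m} (h : χ ∈ L) : Deriv L Γ χ :=
  ⟨[], by simp, h⟩

theorem deriv_empty_iff {χ : MFormula m} : Deriv L ∅ χ ↔ χ ∈ L := by
  refine ⟨fun ⟨l, hl, hχ⟩ => ?_, Deriv.of_mem_logic⟩
  obtain rfl : l = [] := List.eq_nil_iff_forall_not_mem.2 hl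
  exact hχ

theorem exists_isMCS_superset {S : Set (MFormula m)} (hS : LConsistent L S) :
    ∃ Γ, S ⊆ Γ ∧ IsMCS L Γ := by
  classical
  refine zorn_subset_nonempty {Γ | LConsistent L Γ} (fun c hc hchain hne => ?_) S hS
  refine ⟨⋃₀ c, fun ⟨l, hl, hbot⟩ => ?_, fun _ => Set.subset_sUnion_of_mem⟩
  have hsub : ↑l.toFinset ⊆ ⋃ Γ ∈ c, Γ := by
    intro ψ hψ
    simpa [Set.sUnion_eq_biUnion] using hl ψ (List.mem_toFinset.1 hψ)
  obtain ⟨Γ, hΓ, hlΓ⟩ :=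
    DirectedOn.exists_mem_subset_of_finset_subset_biUnion (f := id) hne hchain.directedOn hsub
  exact hc hΓ ⟨l, fun ψ hψ => hlΓ (List.mem_toFinset.2 hψ), hbot⟩

variable (hL : IsNormalLogic L)
include hL

theorem Deriv.of_mem {χ : MFormula m} (h : χ ∈ Γ) : Deriv L Γ χ :=
  ⟨[χ], by simpa using h, hL.taut _ fun v _ hv => by simp [hv]⟩

theorem Deriv.mp {φ ψ : MFormula m} (h₁ : Deriv L Γ (φ.imp ψ))
    (h₂ : Deriv L Γ φ) : Deriv L Γ ψ := by
  obtain ⟨l₁, hl₁, hφψ⟩ := h₁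
  obtain ⟨l₂, hl₂, hφ⟩ := h₂
  refine ⟨l₁ ++ l₂, by simpa [or_imp, forall_and] using And.intro hl₁ hl₂, ?_⟩
  have htaut : (l₁.foldr .imp (φ.imp ψ)).imp ((l₂.foldr .imp φ).imp ((l₁ ++ l₂).foldr .imp ψ))
      ∈ L :=
    hL.taut _ fun v _ hv => by simp only [hv, foldr_imp_iff v hv, List.forall_mem_append]; tauto
  exact hL.mp _ _ (hL.mp _ _ htaut hφψ) hφ

theorem Deriv.mp_of_mem_logic {φ ψ : MFormula m} (h : φ.imp ψ ∈ L)
    (hφ : Deriv L Γ φ) : Deriv L Γ ψ :=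
  (Deriv.of_mem_logic h).mp hL hφ

theorem Deriv.deduction {θ χ : MFormula m}
    (h : Deriv L (insert θ Γ) χ) : Deriv L Γ (θ.imp χ) := by
  classical
  obtain ⟨l, hl, hχ⟩ := h
  refine ⟨l.filter (· ≠ θ), fun ψ hψ => ?_, ?_⟩
  · simp only [List.mem_filter, decide_eq_true_eq] at hψ
    exact (hl ψ hψ.1).resolve_left hψ.2
  · refine hL.mp _ _ (hL.taut _ fun v _ hv => ?_) hχ
    simp only [hv, foldr_imp_iff v hv, List.mem_filter, decide_eq_true_eq]
    intro hall hfilt hθ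
    exact hall fun ψ hψ => if hψθ : ψ = θ then hψθ ▸ hθ else hfilt ψ ⟨hψ, hψθ⟩

theorem Deriv.box_of_unboxed {i : Fin m} {ψ : MFormula m}
    (h : Deriv L {χ | MFormula.box i χ ∈ Γ} ψ) : Deriv L Γ (MFormula.box i ψ) := by
  obtain ⟨l, hl, hψ⟩ := h
  suffices ∀ ψ, Deriv L Γ (.box i (l.foldr .imp ψ)) → Deriv L Γ (.box i ψ) from
    this ψ (Deriv.of_mem_logic (hL.nec i _ hψ))
  clear hψ
  induction l with
  | nil => exact fun _ h => h
  | cons χ l ih =>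
    refine fun ψ h => ih (fun χ' hχ' => hl χ' (List.mem_cons_of_mem _ hχ')) ψ ?_
    exact (h.mp_of_mem_logic hL (hL.kax i χ _)).mp hL
      (Deriv.of_mem hL (hl χ List.mem_cons_self))

theorem not_deriv_iff_lConsistent {ψ : MFormula m} :
    ¬ Deriv L Γ ψ ↔ LConsistent L (insert (ψ.imp .bot) Γ) := by
  refine not_congr ⟨fun h => (Deriv.of_mem hL (Set.mem_insert _ _)).mp hL (h.mono
    (Set.subset_insert _ _)), fun h => ?_⟩
  exact (h.deduction hL).mp_of_mem_logic hL
    (hL.taut _ fun v hb hv => by simp only [hv]; tauto)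

end Derivations

section MaximalConsistent

variable {m : ℕ} {L Γ : Set (MFormula m)} (hL : IsNormalLogic L) (hΓ : IsMCS L Γ)
include hL hΓ

theorem IsMCS.mem_of_deriv {φ : MFormula m} (h : Deriv L Γ φ) : φ ∈ Γ :=
  hΓ.mem_of_prop_insert fun hd => hΓ.1 ((hd.deduction hL).mp hL h)

theorem IsMCS.mem_of_imp_mem {φ ψ : MFormula m} (h : φ.imp ψ ∈ L) (hφ : φ ∈ Γ) : ψ ∈ Γ :=
  hΓ.mem_of_deriv hL ((Deriv.of_mem hL hφ).mp_of_mem_logic hL h)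

theorem IsMCS.bot_notMem : MFormula.bot ∉ Γ :=
  fun h => hΓ.1 (Deriv.of_mem hL h)

theorem IsMCS.imp_mem_iff {φ ψ : MFormula m} : φ.imp ψ ∈ Γ ↔ (φ ∈ Γ → ψ ∈ Γ) := by
  refine ⟨fun h hφ => hΓ.mem_of_deriv hL ((Deriv.of_mem hL h).mp hL (Deriv.of_mem hL hφ)),
    fun h => hΓ.mem_of_deriv hL ?_⟩
  by_cases hφ : φ ∈ Γ
  · exact (Deriv.of_mem hL (h hφ)).mp_of_mem_logic hL
      (hL.taut _ fun v _ hv => by simp only [hv]; tauto)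
  · have hinc : Deriv L (insert φ Γ) .bot := not_not.1 fun hc => hφ (hΓ.mem_of_prop_insert hc)
    exact (hinc.deduction hL).mp_of_mem_logic hL
      (hL.taut _ fun v hb hv => by simp only [hv]; tauto)

end MaximalConsistent

section Lindenbaum

variable {m : ℕ} {L : Set (MFormula m)} (hL : IsNormalLogic L)
include hL

theorem exists_isMCS_notMem {S : Set (MFormula m)} {ψ : MFormula m} (h : ¬ Deriv L S ψ) :
    ∃ Γ, S ⊆ Γ ∧ IsMCS L Γ ∧ ψ ∉ Γ := by
  obtain ⟨Γ, hSΓ, hΓ⟩ := exists_isMCS_superset ((not_deriv_iff_lConsistent hL).1 h)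
  refine ⟨Γ, (Set.subset_insert _ _).trans hSΓ, hΓ, fun hψ => hΓ.bot_notMem hL ?_⟩
  exact (hΓ.imp_mem_iff hL).1 (hSΓ (Set.mem_insert _ _)) hψ

theorem IsMCS.exists_isMCS_of_box_notMem {Γ : Set (MFormula m)} (hΓ : IsMCS L Γ) {i : Fin m}
    {ψ : MFormula m} (h : MFormula.box i ψ ∉ Γ) :
    ∃ Δ, {χ | MFormula.box i χ ∈ Γ} ⊆ Δ ∧ IsMCS L Δ ∧ ψ ∉ Δ :=
  exists_isMCS_notMem hL fun hd => h (hΓ.mem_of_deriv hL (hd.box_of_unboxed hL))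

end Lindenbaum

section TreeModel

open MFormula

def letter : Fin 2 → ℕ → ℕ ⊕ ℕ := ![Sum.inl, Sum.inr]

def ExtendsBy (i : Fin 2) (w w' : List (ℕ ⊕ ℕ)) : Prop :=
  ∃ u : List ℕ, w' = w ++ u.map (letter i)

noncomputable def formulaEnum : ℕ → MFormula 2 := (exists_surjective_nat _).choose

theorem formulaEnum_surjective : Function.Surjective formulaEnum :=
  (exists_surjective_nat _).choose_spec

open Classical in
noncomputable def mcsStep (L : Set (MFormula 2)) (i : Fin 2) (n : ℕ) (Γ : Set (MFormula 2)) :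
    Set (MFormula 2) :=
  if h : ∃ Δ, {χ | box i χ ∈ Γ} ⊆ Δ ∧ IsMCS L Δ ∧ formulaEnum n ∉ Δ then h.choose else Γ

noncomputable def mcsLabel (L : Set (MFormula 2)) (Γ₀ : Set (MFormula 2)) (w : List (ℕ ⊕ ℕ)) :
    Set (MFormula 2) :=
  w.foldl (fun Γ a => a.elim (mcsStep L 0 · Γ) (mcsStep L 1 · Γ)) Γ₀

theorem mcsLabel_append_letter (L Γ₀ : Set (MFormula 2)) (w : List (ℕ ⊕ ℕ)) (i : Fin 2)
    (n : ℕ) : mcsLabel L Γ₀ (w ++ [letter i n]) = mcsStep L i n (mcsLabel L Γ₀ w) := by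
  fin_cases i <;> simp [mcsLabel, letter]

variable {L : Set (MFormula 2)}

theorem isMCS_mcsStep {Γ : Set (MFormula 2)} (hΓ : IsMCS L Γ) (i : Fin 2) (n : ℕ) :
    IsMCS L (mcsStep L i n Γ) := by
  unfold mcsStep
  split_ifs with h
  exacts [h.choose_spec.2.1, hΓ]

theorem isMCS_mcsLabel {Γ₀ : Set (MFormula 2)} (hΓ₀ : IsMCS L Γ₀) (w : List (ℕ ⊕ ℕ)) :
    IsMCS L (mcsLabel L Γ₀ w) := by
  induction w using List.reverseRecOn with
  | nil => exact hΓ₀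
  | append_singleton w a ih =>
    rcases a with n | n
    · exact mcsLabel_append_letter L Γ₀ w 0 n ▸ isMCS_mcsStep ih 0 n
    · exact mcsLabel_append_letter L Γ₀ w 1 n ▸ isMCS_mcsStep ih 1 n

variable (hL : IsNormalLogic L)
include hL

theorem notMem_mcsStep {Γ : Set (MFormula 2)} (hΓ : IsMCS L Γ) {i : Fin 2} {n : ℕ}
    (h : box i (formulaEnum n) ∉ Γ) : formulaEnum n ∉ mcsStep L i n Γ := by
  have hex := hΓ.exists_isMCS_of_box_notMem hL h
  unfold mcsStep
  rw [dif_pos hex]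
  exact hex.choose_spec.2.2

variable (h4 : ∀ i χ, (box i χ).imp (box i (box i χ)) ∈ L)
include h4

theorem box_mem_mcsStep {Γ : Set (MFormula 2)} (hΓ : IsMCS L Γ) {i : Fin 2} {χ : MFormula 2}
    (h : box i χ ∈ Γ) (n : ℕ) : box i χ ∈ mcsStep L i n Γ := by
  unfold mcsStep
  split_ifs with hex
  exacts [hex.choose_spec.1 (hΓ.mem_of_imp_mem hL (h4 i χ) h), h]

theorem box_mem_mcsLabel_append {Γ₀ : Set (MFormula 2)} (hΓ₀ : IsMCS L Γ₀) {w : List (ℕ ⊕ ℕ)}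
    {i : Fin 2} {χ : MFormula 2} (h : box i χ ∈ mcsLabel L Γ₀ w) (u : List ℕ) :
    box i χ ∈ mcsLabel L Γ₀ (w ++ u.map (letter i)) := by
  induction u generalizing w with
  | nil => simpa using h
  | cons n u ih =>
    rw [List.map_cons, ← List.singleton_append, ← List.append_assoc]
    refine ih ?_
    rw [mcsLabel_append_letter]
    exact box_mem_mcsStep hL h4 (isMCS_mcsLabel hΓ₀ w) h n

variable (hT : ∀ i χ, (box i χ).imp χ ∈ L)
include hT

theorem nSat_tree_iff_mem_mcsLabel {Γ₀ : Set (MFormula 2)} (hΓ₀ : IsMCS L Γ₀) (φ : MFormula 2)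
    (w : List (ℕ ⊕ ℕ)) :
    nSat (fun i => nOfK (ExtendsBy i)) (fun p => {w | prop p ∈ mcsLabel L Γ₀ w}) w φ ↔
      φ ∈ mcsLabel L Γ₀ w := by
  have hw := isMCS_mcsLabel hΓ₀ w
  induction φ generalizing w with
  | prop p => rfl
  | bot => exact iff_of_false id (hw.bot_notMem hL)
  | imp φ ψ ihφ ihψ => exact (imp_congr (ihφ w hw) (ihψ w hw)).trans (hw.imp_mem_iff hL).symm
  | box i φ ih =>
    change {w' | _} ∈ 𝓟 {w' | ExtendsBy i w w'} ↔ _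
    simp only [mem_principal, Set.ofPred_subset_ofPred, ExtendsBy, forall_exists_index]
    constructor
    · intro h
      by_contra hbox
      obtain ⟨n, rfl⟩ := formulaEnum_surjective φ
      refine notMem_mcsStep hL hw hbox ?_
      rw [← mcsLabel_append_letter]
      exact (ih _ (isMCS_mcsLabel hΓ₀ _)).1 (h _ [n] rfl)
    · rintro h _ u rfl
      have hu := isMCS_mcsLabel hΓ₀ (w ++ u.map (letter i))
      exact (ih _ hu).2 (hu.mem_of_imp_mem hL (hT i φ) (box_mem_mcsLabel_append hL h4 hΓ₀ h u))

theorem exists_not_nSat_tree_of_notMem {φ : MFormula 2} (h : φ ∉ L) :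
    ∃ V, ¬ nSat (fun i => nOfK (ExtendsBy i)) V [] φ := by
  obtain ⟨Γ₀, -, hΓ₀, hφ⟩ := exists_isMCS_notMem hL (S := ∅) (mt deriv_empty_iff.1 h)
  exact ⟨_, fun hsat => hφ ((nSat_tree_iff_mem_mcsLabel hL h4 hT hΓ₀ φ []).1 hsat)⟩

end TreeModel

/-- Codes `Option ℕ` in `ℤ` with `none` strictly between the even and the odd letters, which
makes the lexicographic order on `PSeq ℕ` dense and without endpoints. -/
def optionCode : Option ℕ → ℤ
  | none => 0
  | some n => if n % 2 = 0 then n + 1 else -(n + 1)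

theorem optionCode_injective : Function.Injective optionCode := by
  rintro (_ | a) (_ | b) h <;> simp only [optionCode, Option.some.injEq] at h ⊢ <;>
    split_ifs at h <;> omega

namespace PSeq

variable {A B : Type}

theorem st_spec (α : PSeq A) {k : ℕ} (hk : α.st ≤ k) : α.1 k = none :=
  Nat.sInf_mem (s := {N | ∀ k ≥ N, α.1 k = none}) α.2 k hk

theorem st_le (α : PSeq A) {N : ℕ} (h : ∀ k ≥ N, α.1 k = none) : α.st ≤ N :=
  Nat.sInf_le h

def empty : PSeq A := ⟨fun _ => none, 0, fun _ _ => rfl⟩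

theorem st_empty : (empty : PSeq A).st = 0 :=
  Nat.le_zero.1 (st_le _ fun _ _ => rfl)

instance [Countable A] : Countable (PSeq A) := by
  refine Function.Injective.countable (f := fun α : PSeq A => (List.range α.st).map α.1) ?_
  intro α β h
  have hst : α.st = β.st := by simpa using congrArg List.length h
  simp only [hst] at h
  refine Subtype.ext (funext fun j => ?_)
  by_cases hj : j < β.st
  · exact List.map_inj_left.1 h j (List.mem_range.2 hj)
  · rw [st_spec α (by omega), st_spec β (by omega)]

def cylSet (k : ℕ) (α : PSeq A) : Set (PSeq A) := {β | ∀ j < k, β.1 j = α.1 j}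

theorem cylSet_antitone (α : PSeq A) : Antitone fun k => cylSet k α :=
  fun _ _ hkl _ hβ j hj => hβ j (hj.trans_le hkl)

def extend (α : PSeq A) (k : ℕ) (u : List A) : PSeq A :=
  ⟨fun j => if j < k then α.1 j else u[j - k]?, k + u.length, fun j hj => by
    simp only [show ¬ j < k by omega, if_false]
    exact List.getElem?_eq_none (by omega)⟩

theorem extend_mem_cylSet (α : PSeq A) (k : ℕ) (u : List A) : α.extend k u ∈ cylSet k α :=
  fun _ hj => if_pos hj

theorem extend_apply_add (α : PSeq A) (k : ℕ) (u : List A) (j : ℕ) :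
    (α.extend k u).1 (k + j) = u[j]? := by
  simp [extend]

theorem st_extend_le (α : PSeq A) (k : ℕ) (u : List A) : (α.extend k u).st ≤ k + u.length :=
  st_le _ fun j hj => by
    simp only [extend, show ¬ j < k by omega, if_false]
    exact List.getElem?_eq_none (by omega)

noncomputable instance : LinearOrder (PSeq ℕ) :=
  LinearOrder.lift' (fun α => toLex (optionCode ∘ α.1))
    fun _ _ h => Subtype.ext (funext fun n => optionCode_injective (congrFun h n))

theorem lt_iff {α β : PSeq ℕ} :
    α < β ↔ ∃ i, (∀ j < i, α.1 j = β.1 j) ∧ optionCode (α.1 i) < optionCode (β.1 i) :=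
  exists_congr fun _ => and_congr_left fun _ =>
    forall₂_congr fun _ _ => optionCode_injective.eq_iff

theorem lt_extend_zero {α : PSeq ℕ} {k : ℕ} (hk : α.st ≤ k) : α < α.extend k [0] :=
  lt_iff.2 ⟨k, fun j hj => (extend_mem_cylSet α k _ j hj).symm, by
    simp [extend, st_spec α hk, optionCode]⟩

theorem extend_one_lt {α : PSeq ℕ} {k : ℕ} (hk : α.st ≤ k) : α.extend k [1] < α :=
  lt_iff.2 ⟨k, fun j hj => extend_mem_cylSet α k _ j hj, by
    simp [extend, st_spec α hk, optionCode]⟩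

instance : NoMaxOrder (PSeq ℕ) := ⟨fun _ => ⟨_, lt_extend_zero le_rfl⟩⟩

instance : NoMinOrder (PSeq ℕ) := ⟨fun _ => ⟨_, extend_one_lt le_rfl⟩⟩

instance : DenselyOrdered (PSeq ℕ) := by
  refine ⟨fun α β hαβ => ?_⟩
  obtain ⟨i, hagree, hi⟩ := lt_iff.1 hαβ
  set k := max α.st (i + 1)
  refine ⟨α.extend k [0], lt_extend_zero (le_max_left _ _), lt_iff.2 ⟨i, fun j hj => ?_, ?_⟩⟩
  · rw [extend_mem_cylSet α k _ j (by omega), hagree j hj]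
  · rwa [extend_mem_cylSet α k _ i (by omega)]

noncomputable instance : TopologicalSpace (PSeq ℕ) := Preorder.topology _

instance : OrderTopology (PSeq ℕ) := ⟨rfl⟩

theorem exists_cylSet_subset_Ioo {a α b : PSeq ℕ} (ha : a < α) (hb : α < b) :
    ∃ k, cylSet k α ⊆ Set.Ioo a b := by
  obtain ⟨i₁, hagree₁, hi₁⟩ := lt_iff.1 ha
  obtain ⟨i₂, hagree₂, hi₂⟩ := lt_iff.1 hb
  refine ⟨max i₁ i₂ + 1, fun β hβ =>
    ⟨lt_iff.2 ⟨i₁, fun j hj => ?_, ?_⟩, lt_iff.2 ⟨i₂, fun j hj => ?_, ?_⟩⟩⟩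
  · rw [hagree₁ j hj, hβ j (by omega)]
  · rwa [hβ i₁ (by omega)]
  · rw [hβ j (by omega), hagree₂ j hj]
  · rwa [hβ i₂ (by omega)]

/-- At the first position below `k` where a sequence differed from `α`, it would fall outside
the interval, since both ends agree with `α` there. -/
theorem Ioo_extend_subset_cylSet (α : PSeq ℕ) (k : ℕ) :
    Set.Ioo (α.extend k [1]) (α.extend k [0]) ⊆ cylSet k α := by
  rintro β ⟨hlo, hhi⟩
  suffices ∀ i ≤ k, ∀ j < i, β.1 j = α.1 j from this k le_rfl
  intro i
  induction i with
  | zero => intro _ j hj; omega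
  | succ i ih =>
    intro hi j hj
    have hagree := ih (by omega)
    obtain hj | rfl := Nat.lt_succ_iff_lt_or_eq.1 hj
    · exact hagree j hj
    have hext : ∀ v, ∀ j' ≤ j, (α.extend k v).1 j' = α.1 j' :=
      fun v j' hj' => extend_mem_cylSet α k v j' (by omega)
    by_contra hne
    rcases (optionCode_injective.ne hne).lt_or_gt with hlt | hgt
    · refine hlo.not_gt (lt_iff.2 ⟨j, fun j' hj' => ?_, by rwa [hext _ j le_rfl]⟩)
      rw [hagree j' hj', hext _ j' hj'.le]
    · refine hhi.not_gt (lt_iff.2 ⟨j, fun j' hj' => ?_, by rwa [hext _ j le_rfl]⟩)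
      rw [hagree j' hj', hext _ j' hj'.le]

theorem nhds_hasBasis_cylSet (α : PSeq ℕ) :
    (𝓝 α).HasBasis (fun _ : ℕ => True) (cylSet · α) := by
  refine (nhds_basis_Ioo α).to_hasBasis (fun _ ⟨ha, hb⟩ => ?_) fun k _ => ?_
  · obtain ⟨k, hk⟩ := exists_cylSet_subset_Ioo ha hb
    exact ⟨k, trivial, hk⟩
  · refine ⟨(α.extend (max k α.st) [1], α.extend (max k α.st) [0]),
      ⟨extend_one_lt (le_max_right _ _), lt_extend_zero (le_max_right _ _)⟩, ?_⟩
    exact (Ioo_extend_subset_cylSet α _).trans (cylSet_antitone α (le_max_left _ _))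

theorem forget_eq_of_st_le (α : PSeq A) {n : ℕ} (hn : α.st ≤ n) :
    α.forget = ((List.range n).map α.1).reduceOption := by
  obtain ⟨t, rfl⟩ := Nat.exists_eq_add_of_le hn
  rw [forget, List.range_add, List.map_append, List.reduceOption_append, List.self_eq_append_right]
  simp [List.reduceOption, st_spec α]

def slot (α : PSeq A) (β : PSeq B) (j : ℕ) : List (A ⊕ B) :=
  (α.1 j).toList.map Sum.inl ++ (β.1 j).toList.map Sum.inr

theorem reduceOption_interleave (α : PSeq A) (β : PSeq B) (n : ℕ) :
    ((List.range (2 * n)).map (interleave α β).1).reduceOption =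
      (List.range n).flatMap (slot α β) := by
  induction n with
  | zero => rfl
  | succ n ih =>
    rw [show 2 * (n + 1) = 2 * n + 1 + 1 by ring, List.range_succ, List.range_succ,
      List.range_succ, List.flatMap_append, ← ih]
    have h₀ : 2 * n % 2 = 0 ∧ 2 * n / 2 = n := by omega
    have h₁ : (2 * n + 1) % 2 = 1 ∧ (2 * n + 1) / 2 = n := by omega
    cases ha : α.1 n <;> cases hb : β.1 n <;>
      simp [interleave, slot, List.reduceOption_append, h₀, h₁, ha, hb]

theorem st_interleave_le (α : PSeq A) (β : PSeq B) {n : ℕ} (hα : α.st ≤ n) (hβ : β.st ≤ n) :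
    (interleave α β).st ≤ 2 * n :=
  st_le _ fun k hk => by
    simp only [interleave]
    split_ifs
    · simp [st_spec α (show α.st ≤ k / 2 by omega)]
    · simp [st_spec β (show β.st ≤ k / 2 by omega)]

theorem gMap_eq_flatMap {α : PSeq A} {β : PSeq B} {n : ℕ} (hα : α.st ≤ n) (hβ : β.st ≤ n) :
    gMap (α, β) = (List.range n).flatMap (slot α β) := by
  rw [gMap, forget_eq_of_st_le _ (st_interleave_le α β hα hβ), reduceOption_interleave]

theorem gMap_fst_eq_append {α α' : PSeq A} {β : PSeq B} {k t : ℕ} (hα : α.st ≤ k) (hβ : β.st ≤ k)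
    (hα' : α' ∈ cylSet k α) (ht : α'.st ≤ k + t) :
    gMap (α', β) =
      gMap (α, β) ++ ((List.range t).flatMap fun j => (α'.1 (k + j)).toList).map Sum.inl := by
  rw [gMap_eq_flatMap ht (by omega), gMap_eq_flatMap hα hβ, List.range_add, List.flatMap_append,
    List.flatMap_map, List.map_flatMap]
  congr 1
  · exact List.flatMap_congr fun j hj => by simp [slot, hα' j (List.mem_range.1 hj)]
  · exact List.flatMap_congr fun j _ => by simp [slot, st_spec β (show β.st ≤ k + j by omega)]

theorem gMap_snd_eq_append {α : PSeq A} {β β' : PSeq B} {k t : ℕ} (hα : α.st ≤ k) (hβ : β.st ≤ k)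
    (hβ' : β' ∈ cylSet k β) (ht : β'.st ≤ k + t) :
    gMap (α, β') =
      gMap (α, β) ++ ((List.range t).flatMap fun j => (β'.1 (k + j)).toList).map Sum.inr := by
  rw [gMap_eq_flatMap (by omega) ht, gMap_eq_flatMap hα hβ, List.range_add, List.flatMap_append,
    List.flatMap_map, List.map_flatMap]
  congr 1
  · exact List.flatMap_congr fun j hj => by simp [slot, hβ' j (List.mem_range.1 hj)]
  · exact List.flatMap_congr fun j _ => by simp [slot, st_spec α (show α.st ≤ k + j by omega)]

theorem flatMap_range_extend_apply_add (α : PSeq A) (k : ℕ) (u : List A) :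
    ((List.range u.length).flatMap fun j => ((α.extend k u).1 (k + j)).toList) = u := by
  simp only [extend_apply_add]
  clear α
  induction u with
  | nil => rfl
  | cons a u ih => simp [List.range_succ_eq_map, List.flatMap_map, ih]

theorem gMap_extend_fst {α : PSeq A} {β : PSeq B} {k : ℕ} (hα : α.st ≤ k) (hβ : β.st ≤ k)
    (u : List A) : gMap (α.extend k u, β) = gMap (α, β) ++ u.map Sum.inl := by
  rw [gMap_fst_eq_append hα hβ (extend_mem_cylSet α k u) (st_extend_le α k u),
    flatMap_range_extend_apply_add]

theorem gMap_extend_snd {α : PSeq A} {β : PSeq B} {k : ℕ} (hα : α.st ≤ k) (hβ : β.st ≤ k)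
    (u : List B) : gMap (α, β.extend k u) = gMap (α, β) ++ u.map Sum.inr := by
  rw [gMap_snd_eq_append hα hβ (extend_mem_cylSet β k u) (st_extend_le β k u),
    flatMap_range_extend_apply_add]

theorem map_nhds_eq_principal {Y : Type} {f : PSeq ℕ → Y} {α : PSeq ℕ} {S : Set Y} (k₀ : ℕ)
    (hmaps : ∀ β ∈ cylSet k₀ α, f β ∈ S) (honto : ∀ k, ∀ y ∈ S, ∃ β ∈ cylSet k α, f β = y) :
    map f (𝓝 α) = 𝓟 S := by
  refine le_antisymm ?_ fun s hs y hy => ?_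
  · exact le_principal_iff.2 (mem_map.2 (mem_of_superset
      ((nhds_hasBasis_cylSet α).mem_of_mem (i := k₀) trivial) hmaps))
  · obtain ⟨k, -, hk⟩ := (nhds_hasBasis_cylSet α).mem_iff.1 (mem_map.1 hs)
    obtain ⟨β, hβ, rfl⟩ := honto k y hy
    exact hk hβ

theorem map_gMap_fst_nhds (α β : PSeq ℕ) :
    map (fun α' => gMap (α', β)) (𝓝 α) = 𝓟 {w | ExtendsBy 0 (gMap (α, β)) w} := by
  refine map_nhds_eq_principal (max α.st β.st) (fun α' hα' => ⟨_, gMap_fst_eq_append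
    (le_max_left _ _) (le_max_right _ _) hα' (t := α'.st) (by omega)⟩) fun k w ⟨u, hw⟩ => ?_
  set K := max k (max α.st β.st)
  refine ⟨α.extend K u, cylSet_antitone α (le_max_left _ _) (extend_mem_cylSet α K u), ?_⟩
  rw [gMap_extend_fst (by omega) (by omega), hw]
  rfl

theorem map_gMap_snd_nhds (α β : PSeq ℕ) :
    map (fun β' => gMap (α, β')) (𝓝 β) = 𝓟 {w | ExtendsBy 1 (gMap (α, β)) w} := by
  refine map_nhds_eq_principal (max α.st β.st) (fun β' hβ' => ⟨_, gMap_snd_eq_append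
    (le_max_left _ _) (le_max_right _ _) hβ' (t := β'.st) (by omega)⟩) fun k w ⟨u, hw⟩ => ?_
  set K := max k (max α.st β.st)
  refine ⟨β.extend K u, cylSet_antitone β (le_max_left _ _) (extend_mem_cylSet β K u), ?_⟩
  rw [gMap_extend_snd (by omega) (by omega), hw]
  rfl

end PSeq

noncomputable def ratOrderIsoPSeq : ℚ ≃o PSeq ℕ := (Order.iso_of_countable_dense ℚ (PSeq ℕ)).some

noncomputable def ratProdToWord (p : ℚ × ℚ) : List (ℕ ⊕ ℕ) :=
  gMap (ratOrderIsoPSeq p.1, ratOrderIsoPSeq p.2)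

theorem nOfK_extendsBy_ratProdToWord : ∀ (i : Fin 2) (p : ℚ × ℚ),
    nOfK (ExtendsBy i) (ratProdToWord p) =
      map ratProdToWord (![prodTau1 (fun x : ℚ => 𝓝 x), prodTau2 (fun x : ℚ => 𝓝 x)] i p) := by
  have hiso (x : ℚ) : map ratOrderIsoPSeq (𝓝 x) = 𝓝 (ratOrderIsoPSeq x) :=
    ratOrderIsoPSeq.toHomeomorph.map_nhds_eq x
  refine Fin.forall_fin_two.2 ⟨fun p => ?_, fun p => ?_⟩
  · simp only [nOfK, ratProdToWord, Matrix.cons_val_zero, prodTau1, map_map]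
    rw [← PSeq.map_gMap_fst_nhds, ← hiso, map_map]
    rfl
  · simp only [nOfK, ratProdToWord, Matrix.cons_val_one, Matrix.cons_val_fin_one, prodTau2,
      map_map]
    rw [← PSeq.map_gMap_snd_nhds, ← hiso, map_map]
    rfl

theorem exists_ratProdToWord_eq_nil : ∃ p, ratProdToWord p = [] :=
  ⟨(ratOrderIsoPSeq.symm PSeq.empty, ratOrderIsoPSeq.symm PSeq.empty), by
    simp [ratProdToWord, PSeq.gMap_eq_flatMap (n := 0) PSeq.st_empty.le PSeq.st_empty.le]⟩

/-- For `𝔛 = (ℚ, τ)` with `τ(x)` the neighborhood filter of `x` in the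
standard topology on `ℚ`: `Log(𝔛 × 𝔛) = S4 ⊗ S4`. -/
theorem log_rat_prod_eq_S4_fusion :
    NLog2 (prodTau1 (fun x : ℚ => nhds x)) (prodTau2 (fun x : ℚ => nhds x))
      = Fusion LogicS4 LogicS4 := by
  refine Set.Subset.antisymm (fun φ hφ => ?_)
    (fusion_subset_NLog2_prod _ _ logicS4_subset_NLog_nhds logicS4_subset_NLog_nhds)
  by_contra hφS4
  obtain ⟨V, hV⟩ := exists_not_nSat_tree_of_notMem (isNormalLogic_normalClosure _)
    box_imp_box_box_mem_fusion_logicS4 box_imp_mem_fusion_logicS4 hφS4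
  obtain ⟨p, hp⟩ := exists_ratProdToWord_eq_nil
  exact hV (hp ▸ (nSat_comap nOfK_extendsBy_ratProdToWord V φ p).1 (hφ _ p))
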